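/- arXiv:2403.02051 — 2 statements merged into one kernel-verified Lean document; each statement's English description precedes it below -/
import Mathlib

section
/- Suppose Assumptions 1, 2 and 3 hold, let X ∈ 𝒳ⁿ be a dataset, let Ω ⊆ {1,…,n} be any nonempty subset, let p ∈ (0,1], let 0 < η < min(m/K₁², 1/m), let σ > 0, and let ξ be a random vector in ℝ^d with 𝔼‖ξ‖^p < ∞. Then for every θ ∈ ℝ^d, 𝔼[V_p(θ − η ∇F_Ω(θ, X) + σξ)] ≤ (1 − ηmp/2) V_p(θ) + 1 + (2ηK)^{p/2} + σ^p 𝔼‖ξ‖^p. -/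
/-!
At the universal stable point `ϑ⋆` every sample gradient vanishes, so Assumptions 1 and 2,
applied between `θ` and `ϑ⋆`, give `‖g‖ ≤ K₁‖δ‖` and `⟪g, δ⟫ ≥ m‖δ‖² - K` for every sample
gradient `g`, where `δ = θ - ϑ⋆`. Both conditions cut out a convex set, so the minibatch
average `G` satisfies them too, and expanding the square with `ηK₁² ≤ m` yields the contraction
`‖δ - ηG‖² ≤ (1 - ηm)‖δ‖² + 2ηK`. Subadditivity of `t ↦ t^{p/2}` and Bernoulli's inequality
`(1 - ηm)^{p/2} ≤ 1 - ηmp/2` turn it into the drift bound for the gradient step. The noise is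
absorbed because `x ↦ √(1 + ‖x‖²)` is `1`-Lipschitz and `t ↦ t^p` is subadditive.
-/

open scoped RealInnerProductSpace
open MeasureTheory Finset

theorem Convex.inv_card_smul_sum_mem {ι E : Type*} [AddCommGroup E] [Module ℝ E] {s : Set E}
    (hs : Convex ℝ s) {t : Finset ι} (ht : t.Nonempty) {z : ι → E} (hz : ∀ i ∈ t, z i ∈ s) :
    (#t : ℝ)⁻¹ • ∑ i ∈ t, z i ∈ s := by
  simpa [Finset.centerMass] using
    hs.centerMass_mem (w := fun _ => (1 : ℝ)) (fun _ _ => zero_le_one) (by simpa using ht) hz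

theorem norm_sub_smul_sq_le_of_le_inner {E : Type*} [NormedAddCommGroup E]
    [InnerProductSpace ℝ E] {δ g : E} {L m K η : ℝ} (hg : ‖g‖ ≤ L * ‖δ‖)
    (hgδ : m * ‖δ‖ ^ 2 - K ≤ ⟪δ, g⟫) (hη : 0 ≤ η) (hηL : η * L ^ 2 ≤ m) :
    ‖δ - η • g‖ ^ 2 ≤ (1 - η * m) * ‖δ‖ ^ 2 + 2 * η * K := by
  have hg_sq : η ^ 2 * ‖g‖ ^ 2 ≤ η * m * ‖δ‖ ^ 2 :=
    calc η ^ 2 * ‖g‖ ^ 2 ≤ η * (η * L ^ 2) * ‖δ‖ ^ 2 := by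
          nlinarith [pow_le_pow_left₀ (norm_nonneg g) hg 2]
      _ ≤ η * m * ‖δ‖ ^ 2 := by gcongr
  rw [norm_sub_sq_real, real_inner_smul_right, norm_smul, Real.norm_eq_abs, mul_pow, sq_abs]
  nlinarith

theorem one_add_rpow_le_of_le_one_sub_mul_add {r s a b q : ℝ} (hr : 0 ≤ r) (hs : 0 ≤ s)
    (ha₀ : 0 ≤ a) (ha₁ : a ≤ 1) (hb : 0 ≤ b) (hq₀ : 0 ≤ q) (hq₁ : q ≤ 1)
    (h : r ≤ (1 - a) * s + b) :
    (1 + r) ^ q ≤ (1 - a * q) * (1 + s) ^ q + 1 + b ^ q := by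
  have bernoulli : (1 - a) ^ q ≤ 1 - a * q := by
    simpa [sub_eq_add_neg, mul_comm] using
      rpow_one_add_le_one_add_mul_self (s := -a) (by linarith) hq₀ hq₁
  calc (1 + r) ^ q ≤ ((1 - a) * (1 + s) + (a + b)) ^ q :=
        Real.rpow_le_rpow (by positivity) (by linarith) hq₀
    _ ≤ ((1 - a) * (1 + s)) ^ q + (a ^ q + b ^ q) := by
        grw [Real.rpow_add_le_add_rpow (by nlinarith) (by positivity) hq₀ hq₁,
          Real.rpow_add_le_add_rpow ha₀ hb hq₀ hq₁]
    _ = (1 - a) ^ q * (1 + s) ^ q + a ^ q + b ^ q := by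
        rw [Real.mul_rpow (by linarith) (by positivity)]; ring
    _ ≤ (1 - a * q) * (1 + s) ^ q + 1 + b ^ q := by
        grw [bernoulli, Real.rpow_le_one ha₀ ha₁ hq₀]

theorem sqrt_one_add_norm_add_sq_le {E : Type*} [SeminormedAddCommGroup E] (u w : E) :
    √(1 + ‖u + w‖ ^ 2) ≤ √(1 + ‖u‖ ^ 2) + ‖w‖ := by
  have hu : ‖u‖ ≤ √(1 + ‖u‖ ^ 2) := Real.le_sqrt_of_sq_le (by linarith)
  rw [Real.sqrt_le_left (by positivity)]
  nlinarith [norm_add_le u w, norm_nonneg (u + w), norm_nonneg w,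
    Real.sq_sqrt (by positivity : (0 : ℝ) ≤ 1 + ‖u‖ ^ 2)]

theorem one_add_norm_add_sq_rpow_half_le {E : Type*} [SeminormedAddCommGroup E] {p : ℝ}
    (hp₀ : 0 ≤ p) (hp₁ : p ≤ 1) (u w : E) :
    (1 + ‖u + w‖ ^ 2) ^ (p / 2) ≤ (1 + ‖u‖ ^ 2) ^ (p / 2) + ‖w‖ ^ p := by
  have sqrt_rpow (x : E) : (1 + ‖x‖ ^ 2) ^ (p / 2) = √(1 + ‖x‖ ^ 2) ^ p := by
    rw [Real.sqrt_eq_rpow, ← Real.rpow_mul (by positivity)]; ring_nf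
  rw [sqrt_rpow, sqrt_rpow]
  calc √(1 + ‖u + w‖ ^ 2) ^ p ≤ (√(1 + ‖u‖ ^ 2) + ‖w‖) ^ p := by
        gcongr; exact sqrt_one_add_norm_add_sq_le u w
    _ ≤ √(1 + ‖u‖ ^ 2) ^ p + ‖w‖ ^ p :=
        Real.rpow_add_le_add_rpow (by positivity) (by positivity) hp₀ hp₁

theorem one_add_norm_sub_smul_sq_rpow_le {E : Type*} [NormedAddCommGroup E]
    [InnerProductSpace ℝ E] {δ g : E} {L m K η q : ℝ} (hg : ‖g‖ ≤ L * ‖δ‖)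
    (hgδ : m * ‖δ‖ ^ 2 - K ≤ ⟪δ, g⟫) (hm : 0 ≤ m) (hK : 0 ≤ K) (hη : 0 ≤ η)
    (hηL : η * L ^ 2 ≤ m) (hηm : η * m ≤ 1) (hq₀ : 0 ≤ q) (hq₁ : q ≤ 1) :
    (1 + ‖δ - η • g‖ ^ 2) ^ q ≤ (1 - η * m * q) * (1 + ‖δ‖ ^ 2) ^ q + 1 + (2 * η * K) ^ q :=
  one_add_rpow_le_of_le_one_sub_mul_add (by positivity) (by positivity) (by positivity) hηm
    (by positivity) hq₀ hq₁ (norm_sub_smul_sq_le_of_le_inner hg hgδ hη hηL)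

theorem integral_one_add_norm_add_smul_sq_rpow_half_le {Ω E : Type*} [MeasurableSpace Ω]
    {μ : Measure Ω} [IsProbabilityMeasure μ] [SeminormedAddCommGroup E] [NormedSpace ℝ E]
    {p σ : ℝ} (hp₀ : 0 ≤ p) (hp₁ : p ≤ 1) (hσ : 0 ≤ σ) (u : E) {ξ : Ω → E}
    (hξ : Integrable (fun ω => ‖ξ ω‖ ^ p) μ) :
    ∫ ω, (1 + ‖u + σ • ξ ω‖ ^ 2) ^ (p / 2) ∂μ
      ≤ (1 + ‖u‖ ^ 2) ^ (p / 2) + σ ^ p * ∫ ω, ‖ξ ω‖ ^ p ∂μ := by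
  have hpointwise (ω : Ω) : (1 + ‖u + σ • ξ ω‖ ^ 2) ^ (p / 2)
      ≤ (1 + ‖u‖ ^ 2) ^ (p / 2) + σ ^ p * ‖ξ ω‖ ^ p := by
    grw [one_add_norm_add_sq_rpow_half_le hp₀ hp₁, norm_smul, Real.norm_of_nonneg hσ,
      Real.mul_rpow hσ (norm_nonneg _)]
  calc _ ≤ ∫ ω, ((1 + ‖u‖ ^ 2) ^ (p / 2) + σ ^ p * ‖ξ ω‖ ^ p) ∂μ :=
        integral_mono_of_nonneg (ae_of_all _ fun _ => by positivity)
          ((integrable_const _).add (hξ.const_mul _)) (ae_of_all _ hpointwise)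
    _ = _ := by
        rw [integral_add (integrable_const _) (hξ.const_mul _), integral_const,
          integral_const_mul, probReal_univ, one_smul]

theorem lyapunov_drift_sgd_general
    {d : ℕ} {H : Type*} [NormedAddCommGroup H] [InnerProductSpace ℝ H]
    (𝒳 : Set H) (f : EuclideanSpace ℝ (Fin d) → H → ℝ)
    (K₁ K₂ : ℝ) (hK₁ : 0 < K₁)
    (hA1 : ∀ (θ θ' : EuclideanSpace ℝ (Fin d)), ∀ x ∈ 𝒳, ∀ x' ∈ 𝒳,
      ‖gradient (fun ϑ => f ϑ x) θ - gradient (fun ϑ => f ϑ x') θ'‖ ≤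
        K₁ * ‖θ - θ'‖ + K₂ * ‖x - x'‖ * (‖θ‖ + ‖θ'‖ + 1))
    (m K : ℝ) (hm : 0 < m) (hK : 0 < K)
    (hA2b : ∀ (θ₁ θ₂ : EuclideanSpace ℝ (Fin d)), ∀ x ∈ 𝒳,
      m * ‖θ₁ - θ₂‖ ^ 2 - K ≤
        ⟪gradient (fun ϑ => f ϑ x) θ₁ - gradient (fun ϑ => f ϑ x) θ₂, θ₁ - θ₂⟫)
    (ϑstar : EuclideanSpace ℝ (Fin d))
    (hA3 : ∀ x ∈ 𝒳, gradient (fun ϑ => f ϑ x) ϑstar = 0)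
    {n : ℕ} (X : Fin n → H) (hX : ∀ i, X i ∈ 𝒳)
    (S : Finset (Fin n)) (hS : S.Nonempty)
    (p : ℝ) (hp0 : 0 < p) (hp1 : p ≤ 1)
    (η : ℝ) (hη0 : 0 < η) (hη : η < min (m / K₁ ^ 2) (1 / m))
    (σ : ℝ) (hσ : 0 < σ)
    {Ω : Type*} [MeasurableSpace Ω] (μ : Measure Ω) [IsProbabilityMeasure μ]
    (ξ : Ω → EuclideanSpace ℝ (Fin d))
    (hint : Integrable (fun ω => ‖ξ ω‖ ^ p) μ)
    (θ : EuclideanSpace ℝ (Fin d)) :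
    ∫ ω, (1 + ‖θ - η • ((S.card : ℝ)⁻¹ • ∑ j ∈ S, gradient (fun ϑ => f ϑ (X j)) θ)
            + σ • ξ ω - ϑstar‖ ^ 2) ^ (p / 2) ∂μ
      ≤ (1 - η * m * p / 2) * (1 + ‖θ - ϑstar‖ ^ 2) ^ (p / 2)
        + 1 + (2 * η * K) ^ (p / 2) + σ ^ p * ∫ ω, ‖ξ ω‖ ^ p ∂μ := by
  set δ := θ - ϑstar
  set G := (S.card : ℝ)⁻¹ • ∑ j ∈ S, gradient (fun ϑ => f ϑ (X j)) θ
  have hηm : η * m < 1 := by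
    have := hη.trans_le (min_le_right _ _); rwa [lt_div_iff₀ hm] at this
  have hηK₁ : η * K₁ ^ 2 ≤ m := by
    have := hη.trans_le (min_le_left _ _); rw [lt_div_iff₀ (by positivity)] at this; linarith
  have hsample : ∀ j ∈ S, gradient (fun ϑ => f ϑ (X j)) θ ∈
      Metric.closedBall 0 (K₁ * ‖δ‖) ∩ {g | m * ‖δ‖ ^ 2 - K ≤ ⟪δ, g⟫} := by
    intro j _
    have hLip := hA1 θ ϑstar (X j) (hX j) (X j) (hX j)
    have hdiss := hA2b θ ϑstar (X j) (hX j)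
    simp only [hA3 (X j) (hX j), sub_zero, sub_self, norm_zero] at hLip hdiss
    exact ⟨mem_closedBall_zero_iff.2 (by simpa using hLip),
      by rwa [Set.mem_ofPred_eq, real_inner_comm]⟩
  obtain ⟨hGnorm, hGinner⟩ := ((convex_closedBall _ _).inter
    (convex_halfSpace_ge (innerₛₗ ℝ δ).isLinear _)).inv_card_smul_sum_mem hS hsample
  calc _ = ∫ ω, (1 + ‖(δ - η • G) + σ • ξ ω‖ ^ 2) ^ (p / 2) ∂μ := by
        congr! 6; simp only [δ]; abel
    _ ≤ (1 + ‖δ - η • G‖ ^ 2) ^ (p / 2) + σ ^ p * ∫ ω, ‖ξ ω‖ ^ p ∂μ :=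
        integral_one_add_norm_add_smul_sq_rpow_half_le hp0.le hp1 hσ.le _ hint
    _ ≤ _ := by
        grw [one_add_norm_sub_smul_sq_rpow_le (mem_closedBall_zero_iff.1 hGnorm) hGinner hm.le
          hK.le hη0.le hηK₁ hηm.le (by positivity) (by linarith), mul_div_assoc]

/-- Under Assumptions 1, 2 and 3, for any nonempty minibatch `S`,
`p ∈ (0,1]`, `0 < η < min(m/K₁², 1/m)`, `σ > 0` and a random vector `ξ` with
`𝔼‖ξ‖^p < ∞`, the Lyapunov function `V_p(θ) = (1 + ‖θ - ϑ⋆‖²)^{p/2}` satisfies a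
Foster–Lyapunov drift condition along one noisy SGD step. -/
theorem lyapunov_drift_sgd
    {d : ℕ} {H : Type*} [NormedAddCommGroup H] [InnerProductSpace ℝ H]
    (𝒳 : Set H) (f : EuclideanSpace ℝ (Fin d) → H → ℝ)
    (K₁ K₂ : ℝ) (hK₁ : 0 < K₁) (hK₂ : 0 < K₂)
    (hdiff : ∀ x ∈ 𝒳, Differentiable ℝ (fun θ => f θ x))
    (hA1 : ∀ (θ θ' : EuclideanSpace ℝ (Fin d)), ∀ x ∈ 𝒳, ∀ x' ∈ 𝒳,
      ‖gradient (fun ϑ => f ϑ x) θ - gradient (fun ϑ => f ϑ x') θ'‖ ≤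
        K₁ * ‖θ - θ'‖ + K₂ * ‖x - x'‖ * (‖θ‖ + ‖θ'‖ + 1))
    (B m K : ℝ) (hB : 0 < B) (hm : 0 < m) (hK : 0 < K)
    (hA2a : ∀ x ∈ 𝒳, ‖gradient (fun ϑ => f ϑ x) 0‖ ≤ B)
    (hA2b : ∀ (θ₁ θ₂ : EuclideanSpace ℝ (Fin d)), ∀ x ∈ 𝒳,
      m * ‖θ₁ - θ₂‖ ^ 2 - K ≤
        ⟪gradient (fun ϑ => f ϑ x) θ₁ - gradient (fun ϑ => f ϑ x) θ₂, θ₁ - θ₂⟫)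
    (ϑstar : EuclideanSpace ℝ (Fin d))
    (hA3 : ∀ x ∈ 𝒳, gradient (fun ϑ => f ϑ x) ϑstar = 0)
    {n : ℕ} (hn : 0 < n) (X : Fin n → H) (hX : ∀ i, X i ∈ 𝒳)
    (S : Finset (Fin n)) (hS : S.Nonempty)
    (p : ℝ) (hp0 : 0 < p) (hp1 : p ≤ 1)
    (η : ℝ) (hη0 : 0 < η) (hη : η < min (m / K₁ ^ 2) (1 / m))
    (σ : ℝ) (hσ : 0 < σ)
    {Ω : Type*} [MeasurableSpace Ω] (μ : Measure Ω) [IsProbabilityMeasure μ]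
    (ξ : Ω → EuclideanSpace ℝ (Fin d)) (hξ : Measurable ξ)
    (hint : Integrable (fun ω => ‖ξ ω‖ ^ p) μ)
    (θ : EuclideanSpace ℝ (Fin d)) :
    ∫ ω, (1 + ‖θ - η • ((S.card : ℝ)⁻¹ • ∑ j ∈ S, gradient (fun ϑ => f ϑ (X j)) θ)
            + σ • ξ ω - ϑstar‖ ^ 2) ^ (p / 2) ∂μ
      ≤ (1 - η * m * p / 2) * (1 + ‖θ - ϑstar‖ ^ 2) ^ (p / 2)
        + 1 + (2 * η * K) ^ (p / 2) + σ ^ p * ∫ ω, ‖ξ ω‖ ^ p ∂μ :=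
  lyapunov_drift_sgd_general 𝒳 f K₁ K₂ hK₁ hA1 m K hm hK hA2b ϑstar hA3 X hX S hS p hp0 hp1 η hη0 hη
    σ hσ μ ξ hint θ
end

section
/- Suppose Assumptions 1, 2 and 3 hold, let X ∈ 𝒳ⁿ be a dataset, let p ∈ (0, 1/2], let η > 0 be such that 1 − 2ηm + η²K₁² ≥ 0, and let Z be a random vector in ℝ^d with 𝔼‖Z‖^{2p} < ∞. Then for every θ ∈ ℝ^d, 𝔼[(1 + ‖θ − η ∇F(θ, X) + Z − ϑ⋆‖²)^p] ≤ 1 + (1 − 2ηm + η²K₁²)^p ‖θ − ϑ⋆‖^{2p} + (2ηK)^p + 𝔼‖Z‖^{2p}. -/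
open scoped BigOperators RealInnerProductSpace
open MeasureTheory

/-!
Write `v = θ - ϑ⋆` and `g = ∇F(θ, X)`. Since `∇f(ϑ⋆, x) = 0`, Assumptions 1 and 2 with
`θ̂ = ϑ⋆` give `‖∇f(θ, x)‖ ≤ K₁‖v‖` and `⟪∇f(θ, x), v⟫ ≥ m‖v‖² - K`; both are convex conditions,
so they pass to the average `g`. Expanding the square then yields the one-step contraction
`‖v - ηg‖² ≤ (1 - 2ηm + η²K₁²)‖v‖² + 2ηK`. The noise is split off by the triangle inequality
for `√(1 + ‖·‖²)` followed by subadditivity of `t ↦ t^{2p}` (as `2p ≤ 1`), and the remaining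
deterministic term is split by subadditivity of `t ↦ t^p`.
-/

lemma Convex.inv_natCast_smul_sum_mem {E : Type*} [AddCommGroup E] [Module ℝ E] {s : Set E}
    (hs : Convex ℝ s) {n : ℕ} (hn : 0 < n) {z : Fin n → E} (hz : ∀ j, z j ∈ s) :
    (n : ℝ)⁻¹ • ∑ j, z j ∈ s := by
  simpa [Finset.centerMass] using hs.centerMass_mem (t := Finset.univ) (w := fun _ => (1 : ℝ))
    (fun _ _ => zero_le_one) (by simpa using hn) (fun j _ => hz j)

section InnerProductSpace

variable {F : Type*} [NormedAddCommGroup F] [InnerProductSpace ℝ F]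

lemma le_inner_inv_natCast_smul_sum {n : ℕ} (hn : 0 < n) {g : Fin n → F} {v : F} {c : ℝ}
    (h : ∀ j, c ≤ ⟪g j, v⟫) : c ≤ ⟪(n : ℝ)⁻¹ • ∑ j, g j, v⟫ :=
  (convex_halfSpace_ge (f := fun w : F => ⟪w, v⟫)
    ⟨fun x y => inner_add_left x y v, fun a x => real_inner_smul_left x v a⟩
    c).inv_natCast_smul_sum_mem hn h

lemma norm_inv_natCast_smul_sum_le {n : ℕ} (hn : 0 < n) {g : Fin n → F} {c : ℝ}
    (h : ∀ j, ‖g j‖ ≤ c) : ‖(n : ℝ)⁻¹ • ∑ j, g j‖ ≤ c :=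
  mem_closedBall_zero_iff.mp <| (convex_closedBall 0 c).inv_natCast_smul_sum_mem hn
    fun j => mem_closedBall_zero_iff.mpr (h j)

lemma norm_sub_smul_sq_le {v g : F} {m K K₁ η : ℝ} (hη : 0 ≤ η)
    (hinner : m * ‖v‖ ^ 2 - K ≤ ⟪g, v⟫) (hnorm : ‖g‖ ≤ K₁ * ‖v‖) :
    ‖v - η • g‖ ^ 2 ≤ (1 - 2 * η * m + η ^ 2 * K₁ ^ 2) * ‖v‖ ^ 2 + 2 * η * K := by
  have hexpand : ‖v - η • g‖ ^ 2 = ‖v‖ ^ 2 - 2 * η * ⟪g, v⟫ + η ^ 2 * ‖g‖ ^ 2 := by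
    rw [norm_sub_sq_real, real_inner_smul_right, norm_smul, Real.norm_of_nonneg hη, mul_pow,
      real_inner_comm]
    ring
  have hsq : ‖g‖ ^ 2 ≤ (K₁ * ‖v‖) ^ 2 := pow_le_pow_left₀ (norm_nonneg g) hnorm 2
  rw [hexpand]
  nlinarith [mul_le_mul_of_nonneg_left hinner hη, mul_le_mul_of_nonneg_left hsq (sq_nonneg η)]

end InnerProductSpace

lemma Real.sq_rpow_eq_rpow_two_mul {s : ℝ} (hs : 0 ≤ s) (p : ℝ) : (s ^ 2) ^ p = s ^ (2 * p) := by
  simpa using (Real.rpow_natCast_mul hs 2 p).symm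

lemma Real.rpow_eq_sqrt_rpow_two_mul {x : ℝ} (hx : 0 ≤ x) (p : ℝ) : x ^ p = √x ^ (2 * p) := by
  rw [← Real.sq_rpow_eq_rpow_two_mul (Real.sqrt_nonneg x), Real.sq_sqrt hx]

lemma one_add_rpow_le_of_le_add {q a b p : ℝ} (hq : 0 ≤ q) (ha : 0 ≤ a) (hb : 0 ≤ b)
    (hqab : q ≤ a + b) (hp0 : 0 ≤ p) (hp1 : p ≤ 1) : (1 + q) ^ p ≤ 1 + a ^ p + b ^ p :=
  calc (1 + q) ^ p ≤ (1 + (a + b)) ^ p := by gcongr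
    _ ≤ 1 ^ p + (a + b) ^ p := Real.rpow_add_le_add_rpow zero_le_one (by positivity) hp0 hp1
    _ ≤ 1 + a ^ p + b ^ p := by
      rw [Real.one_rpow, add_assoc]
      gcongr
      exact Real.rpow_add_le_add_rpow ha hb hp0 hp1

section SeminormedAddCommGroup

variable {E : Type*} [SeminormedAddCommGroup E]

lemma sqrt_one_add_sq_norm_add_le (a z : E) :
    √(1 + ‖a + z‖ ^ 2) ≤ √(1 + ‖a‖ ^ 2) + ‖z‖ := by
  rw [Real.sqrt_le_left (by positivity)]
  have hsq : √(1 + ‖a‖ ^ 2) ^ 2 = 1 + ‖a‖ ^ 2 := Real.sq_sqrt (by positivity)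
  have ha : ‖a‖ ≤ √(1 + ‖a‖ ^ 2) := by
    simpa using Real.abs_le_sqrt (x := ‖a‖) (by linarith)
  nlinarith [norm_add_le a z, norm_nonneg (a + z), norm_nonneg z]

lemma one_add_sq_norm_add_rpow_le {p : ℝ} (hp0 : 0 ≤ p) (hp1 : p ≤ 1 / 2) (a z : E) :
    (1 + ‖a + z‖ ^ 2) ^ p ≤ (1 + ‖a‖ ^ 2) ^ p + ‖z‖ ^ (2 * p) := by
  rw [Real.rpow_eq_sqrt_rpow_two_mul (by positivity),
    Real.rpow_eq_sqrt_rpow_two_mul (x := 1 + ‖a‖ ^ 2) (by positivity)]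
  calc √(1 + ‖a + z‖ ^ 2) ^ (2 * p) ≤ (√(1 + ‖a‖ ^ 2) + ‖z‖) ^ (2 * p) := by
        gcongr
        exact sqrt_one_add_sq_norm_add_le a z
    _ ≤ √(1 + ‖a‖ ^ 2) ^ (2 * p) + ‖z‖ ^ (2 * p) :=
        Real.rpow_add_le_add_rpow (Real.sqrt_nonneg _) (norm_nonneg z) (by linarith) (by linarith)

end SeminormedAddCommGroup

lemma integral_le_const_add_integral {Ω : Type*} [MeasurableSpace Ω] {μ : Measure Ω}
    [IsProbabilityMeasure μ] {Φ G : Ω → ℝ} {D : ℝ} (hΦ : ∀ ω, 0 ≤ Φ ω) (hG : Integrable G μ)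
    (hle : ∀ ω, Φ ω ≤ D + G ω) : ∫ ω, Φ ω ∂μ ≤ D + ∫ ω, G ω ∂μ :=
  calc ∫ ω, Φ ω ∂μ ≤ ∫ ω, D + G ω ∂μ :=
        integral_mono_of_nonneg (ae_of_all _ hΦ) ((integrable_const D).add hG) (ae_of_all _ hle)
    _ = D + ∫ ω, G ω ∂μ := by simp [integral_add (integrable_const D) hG]

theorem lyapunov_moment_bound_gd_general
    {d : ℕ} {H : Type*} [NormedAddCommGroup H] [InnerProductSpace ℝ H]
    (𝒳 : Set H) (f : EuclideanSpace ℝ (Fin d) → H → ℝ)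
    (K₁ K₂ : ℝ)
    (hA1 : ∀ (θ θ' : EuclideanSpace ℝ (Fin d)), ∀ x ∈ 𝒳, ∀ x' ∈ 𝒳,
      ‖gradient (fun ϑ => f ϑ x) θ - gradient (fun ϑ => f ϑ x') θ'‖ ≤
        K₁ * ‖θ - θ'‖ + K₂ * ‖x - x'‖ * (‖θ‖ + ‖θ'‖ + 1))
    (m K : ℝ) (hK : 0 < K)
    (hA2b : ∀ (θ₁ θ₂ : EuclideanSpace ℝ (Fin d)), ∀ x ∈ 𝒳,
      m * ‖θ₁ - θ₂‖ ^ 2 - K ≤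
        ⟪gradient (fun ϑ => f ϑ x) θ₁ - gradient (fun ϑ => f ϑ x) θ₂, θ₁ - θ₂⟫)
    (ϑstar : EuclideanSpace ℝ (Fin d))
    (hA3 : ∀ x ∈ 𝒳, gradient (fun ϑ => f ϑ x) ϑstar = 0)
    {n : ℕ} (hn : 0 < n) (X : Fin n → H) (hX : ∀ i, X i ∈ 𝒳)
    (p : ℝ) (hp0 : 0 < p) (hp1 : p ≤ 1 / 2)
    (η : ℝ) (hη0 : 0 < η) (hη : 0 ≤ 1 - 2 * η * m + η ^ 2 * K₁ ^ 2)
    {Ω : Type*} [MeasurableSpace Ω] (μ : Measure Ω) [IsProbabilityMeasure μ]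
    (Z : Ω → EuclideanSpace ℝ (Fin d))
    (hint : Integrable (fun ω => ‖Z ω‖ ^ (2 * p)) μ)
    (θ : EuclideanSpace ℝ (Fin d)) :
    ∫ ω, (1 + ‖θ - η • ((n : ℝ)⁻¹ • ∑ j : Fin n, gradient (fun ϑ => f ϑ (X j)) θ)
            + Z ω - ϑstar‖ ^ 2) ^ p ∂μ
      ≤ 1 + (1 - 2 * η * m + η ^ 2 * K₁ ^ 2) ^ p * ‖θ - ϑstar‖ ^ (2 * p)
        + (2 * η * K) ^ p + ∫ ω, ‖Z ω‖ ^ (2 * p) ∂μ := by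
  set g := (n : ℝ)⁻¹ • ∑ j : Fin n, gradient (fun ϑ => f ϑ (X j)) θ
  have hinner : m * ‖θ - ϑstar‖ ^ 2 - K ≤ ⟪g, θ - ϑstar⟫ :=
    le_inner_inv_natCast_smul_sum hn fun j => by
      simpa [hA3 _ (hX j)] using hA2b θ ϑstar (X j) (hX j)
  have hnorm : ‖g‖ ≤ K₁ * ‖θ - ϑstar‖ :=
    norm_inv_natCast_smul_sum_le hn fun j => by
      simpa [hA3 _ (hX j)] using hA1 θ ϑstar (X j) (hX j) (X j) (hX j)
  have hdet : (1 + ‖θ - ϑstar - η • g‖ ^ 2) ^ p ≤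
      1 + (1 - 2 * η * m + η ^ 2 * K₁ ^ 2) ^ p * ‖θ - ϑstar‖ ^ (2 * p) + (2 * η * K) ^ p := by
    rw [← Real.sq_rpow_eq_rpow_two_mul (norm_nonneg _), ← Real.mul_rpow hη (sq_nonneg _)]
    exact one_add_rpow_le_of_le_add (sq_nonneg _) (by positivity) (by positivity)
      (norm_sub_smul_sq_le hη0.le hinner hnorm) hp0.le (by linarith)
  refine integral_le_const_add_integral (fun ω => by positivity) hint fun ω => ?_
  rw [show θ - η • g + Z ω - ϑstar = θ - ϑstar - η • g + Z ω by abel]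
  linarith [one_add_sq_norm_add_rpow_le hp0.le hp1 (θ - ϑstar - η • g) (Z ω)]

/-- Under Assumptions 1, 2 and 3, for `p ∈ (0, 1/2]`, step-size `η > 0`
with `1 - 2ηm + η²K₁² ≥ 0`, and a random vector `Z` with `𝔼‖Z‖^{2p} < ∞`, we have
`𝔼[(1 + ‖θ - η∇F(θ,X) + Z - ϑ⋆‖²)^p] ≤ 1 + (1 - 2ηm + η²K₁²)^p ‖θ - ϑ⋆‖^{2p}
  + (2ηK)^p + 𝔼‖Z‖^{2p}`. -/
theorem lyapunov_moment_bound_gd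
    {d : ℕ} {H : Type*} [NormedAddCommGroup H] [InnerProductSpace ℝ H]
    (𝒳 : Set H) (f : EuclideanSpace ℝ (Fin d) → H → ℝ)
    (K₁ K₂ : ℝ) (hK₁ : 0 < K₁) (hK₂ : 0 < K₂)
    (hdiff : ∀ x ∈ 𝒳, Differentiable ℝ (fun θ => f θ x))
    (hA1 : ∀ (θ θ' : EuclideanSpace ℝ (Fin d)), ∀ x ∈ 𝒳, ∀ x' ∈ 𝒳,
      ‖gradient (fun ϑ => f ϑ x) θ - gradient (fun ϑ => f ϑ x') θ'‖ ≤
        K₁ * ‖θ - θ'‖ + K₂ * ‖x - x'‖ * (‖θ‖ + ‖θ'‖ + 1))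
    (B m K : ℝ) (hB : 0 < B) (hm : 0 < m) (hK : 0 < K)
    (hA2a : ∀ x ∈ 𝒳, ‖gradient (fun ϑ => f ϑ x) 0‖ ≤ B)
    (hA2b : ∀ (θ₁ θ₂ : EuclideanSpace ℝ (Fin d)), ∀ x ∈ 𝒳,
      m * ‖θ₁ - θ₂‖ ^ 2 - K ≤
        ⟪gradient (fun ϑ => f ϑ x) θ₁ - gradient (fun ϑ => f ϑ x) θ₂, θ₁ - θ₂⟫)
    (ϑstar : EuclideanSpace ℝ (Fin d))
    (hA3 : ∀ x ∈ 𝒳, gradient (fun ϑ => f ϑ x) ϑstar = 0)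
    {n : ℕ} (hn : 0 < n) (X : Fin n → H) (hX : ∀ i, X i ∈ 𝒳)
    (p : ℝ) (hp0 : 0 < p) (hp1 : p ≤ 1 / 2)
    (η : ℝ) (hη0 : 0 < η) (hη : 0 ≤ 1 - 2 * η * m + η ^ 2 * K₁ ^ 2)
    {Ω : Type*} [MeasurableSpace Ω] (μ : Measure Ω) [IsProbabilityMeasure μ]
    (Z : Ω → EuclideanSpace ℝ (Fin d)) (hZ : Measurable Z)
    (hint : Integrable (fun ω => ‖Z ω‖ ^ (2 * p)) μ)
    (θ : EuclideanSpace ℝ (Fin d)) :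
    ∫ ω, (1 + ‖θ - η • ((n : ℝ)⁻¹ • ∑ j : Fin n, gradient (fun ϑ => f ϑ (X j)) θ)
            + Z ω - ϑstar‖ ^ 2) ^ p ∂μ
      ≤ 1 + (1 - 2 * η * m + η ^ 2 * K₁ ^ 2) ^ p * ‖θ - ϑstar‖ ^ (2 * p)
        + (2 * η * K) ^ p + ∫ ω, ‖Z ω‖ ^ (2 * p) ∂μ :=
  lyapunov_moment_bound_gd_general 𝒳 f K₁ K₂ hA1 m K hK hA2b ϑstar hA3 hn X hX p hp0 hp1 η hη0 hη μ
    Z hint θ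
end
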